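/- arXiv:2502.06391 — 3 statements merged into one kernel-verified Lean document; each statement's English description precedes it below -/
import Mathlib

section
/- If T solves the ODE T'(s) = f(s)·max(0, (T_max - T(s))/(T_max - T_0)) on [0,S] with T(0) = T_0 < T_max and f continuous and nonnegative, then T(s) < T_max for all s in [0,S]. -/
/-!
`Tmax` is an equilibrium of the ODE, and since `f` is bounded on `[0, S]` the right-hand side is
Lipschitz in the state, uniformly in time. By uniqueness of solutions (run backwards in time), a
solution that reaches `Tmax` at some time `c` equals `Tmax` on all of `[0, c]`, contradicting
`T 0 = T0 < Tmax`; the intermediate value theorem provides such a `c` as soon as `T` ever reaches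
`Tmax`.
-/

open Set NNReal

theorem lipschitzWith_mul_max_zero_sub_div (a m d : ℝ) :
    LipschitzWith (‖a‖₊ / ‖d‖₊) fun x => a * max 0 ((m - x) / d) := by
  refine LipschitzWith.of_dist_le_mul fun x y => ?_
  simp only [Real.dist_eq, NNReal.coe_div, coe_nnnorm, Real.norm_eq_abs, ← mul_sub]
  rw [abs_mul, div_mul_eq_mul_div, mul_div_assoc]
  gcongr
  calc |max 0 ((m - x) / d) - max 0 ((m - y) / d)| ≤ |(m - x) / d - (m - y) / d| :=
        (abs_max_sub_max_le_max _ _ _ _).trans (by simp)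
    _ = |x - y| / |d| := by
        rw [div_sub_div_same, abs_div, sub_sub_sub_cancel_left, abs_sub_comm]

theorem ODE_eqOn_equilibrium_of_mem_Icc_left {E : Type*} [NormedAddCommGroup E]
    [NormedSpace ℝ E] {v : ℝ → E → E} {K : ℝ≥0} {x : ℝ → E} {x₀ : E} {a b : ℝ}
    (hv : ∀ t ∈ Ioc a b, LipschitzWith K (v t)) (hx₀ : ∀ t ∈ Ioc a b, v t x₀ = 0)
    (hx : ∀ t ∈ Icc a b, HasDerivAt x (v t (x t)) t) (hb : x b = x₀) :
    EqOn x (fun _ => x₀) (Icc a b) :=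
  ODE_solution_unique_of_mem_Icc_left (s := fun _ => univ)
    (fun t ht => (hv t ht).lipschitzOnWith)
    (fun t ht => (hx t ht).continuousAt.continuousWithinAt)
    (fun t ht => (hx t (Ioc_subset_Icc_self ht)).hasDerivWithinAt)
    (fun _ _ => mem_univ _) continuousOn_const
    (fun t ht => by simpa [hx₀ t ht] using hasDerivWithinAt_const t (Iic t) x₀)
    (fun _ _ => mem_univ _) hb

theorem stmt_0_general (T0 Tmax S : ℝ) (hT : T0 < Tmax)
    (f : ℝ → ℝ) (hf : ContinuousOn f (Set.Icc 0 S))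
    (T : ℝ → ℝ)
    (hode : ∀ s ∈ Set.Icc 0 S,
      HasDerivAt T (f s * max 0 ((Tmax - T s) / (Tmax - T0))) s)
    (hinit : T 0 = T0) :
    ∀ s ∈ Set.Icc 0 S, T s < Tmax := by
  obtain ⟨C, hC⟩ := isCompact_Icc.exists_bound_of_continuousOn hf
  intro t ht
  by_contra! hTt
  have hTcont : ContinuousOn T (Icc 0 t) := fun s hs =>
    (hode s ⟨hs.1, hs.2.trans ht.2⟩).continuousAt.continuousWithinAt
  obtain ⟨c, hc, hTc⟩ := intermediate_value_Icc ht.1 hTcont ⟨by linarith, hTt⟩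
  have hcS : Icc 0 c ⊆ Icc 0 S := Icc_subset_Icc_right (hc.2.trans ht.2)
  have hlip : ∀ s ∈ Ioc 0 c, LipschitzWith (C.toNNReal / ‖Tmax - T0‖₊)
      fun x => f s * max 0 ((Tmax - x) / (Tmax - T0)) :=
    fun s hs => (lipschitzWith_mul_max_zero_sub_div _ _ _).weaken <| by
      gcongr
      exact NNReal.le_toNNReal_of_coe_le (hC s (hcS (Ioc_subset_Icc_self hs)))
  have hequil := ODE_eqOn_equilibrium_of_mem_Icc_left hlip (fun s _ => by simp)
    (fun s hs => hode s (hcS hs)) hTc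
  have hT0 : T 0 = Tmax := hequil ⟨le_rfl, hc.1⟩
  linarith

/-- Adiabatic linear heating model (6): the temperature stays below `Tmax`. -/
theorem stmt_0 (T0 Tmax S : ℝ) (hT : T0 < Tmax) (hS : 0 < S)
    (f : ℝ → ℝ) (hf : ContinuousOn f (Set.Icc 0 S))
    (hf0 : ∀ s ∈ Set.Icc 0 S, 0 ≤ f s)
    (T : ℝ → ℝ)
    (hode : ∀ s ∈ Set.Icc 0 S,
      HasDerivAt T (f s * max 0 ((Tmax - T s) / (Tmax - T0))) s)
    (hinit : T 0 = T0) :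
    ∀ s ∈ Set.Icc 0 S, T s < Tmax :=
  stmt_0_general T0 Tmax S hT f hf T hode hinit
end

section
/- If T solves T'(s) = f(s)·max(0, (T_max - T(s))/(T_max - T_0))² on [0,S] with T(0) = T_0 < T_max and f continuous nonnegative, then T is nondecreasing and bounded above by T_max. -/
/-!
Both claims are comparison arguments for the right-hand side `f s * max 0 (…) ^ 2`, which is
nonnegative and vanishes wherever `T s ≥ Tmax`. Nonnegativity gives monotonicity. For the bound,
`T` stays below each tilted barrier `Tmax + δ * (s + 1)`: at a first contact `T` would exceed
`Tmax` and so have slope `0`, less than the barrier's slope `δ`. Letting `δ → 0` gives `T ≤ Tmax`.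
-/

open Set

theorem monotoneOn_Icc_of_hasDerivAt_nonneg {g g' : ℝ → ℝ} {a b : ℝ}
    (hg : ∀ x ∈ Icc a b, HasDerivAt g (g' x) x) (hg' : ∀ x ∈ Icc a b, 0 ≤ g' x) :
    MonotoneOn g (Icc a b) := by
  refine monotoneOn_of_hasDerivWithinAt_nonneg (f' := g') (convex_Icc a b)
    (fun x hx => (hg x hx).continuousAt.continuousWithinAt) (fun x hx => ?_) (fun x hx => ?_)
  · rw [interior_Icc] at hx ⊢
    exact (hg x (Ioo_subset_Icc_self hx)).hasDerivWithinAt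
  · rw [interior_Icc] at hx
    exact hg' x (Ioo_subset_Icc_self hx)

theorem le_of_hasDerivAt_nonpos_of_gt {g g' : ℝ → ℝ} {a b c : ℝ}
    (hg : ∀ x ∈ Icc a b, HasDerivAt g (g' x) x) (ha : g a ≤ c)
    (hg' : ∀ x ∈ Ico a b, c < g x → g' x ≤ 0) : ∀ x ∈ Icc a b, g x ≤ c := by
  have barrier : ∀ δ > 0, ∀ x ∈ Icc a b, g x ≤ c + δ * (x - a + 1) := by
    intro δ hδ
    refine image_le_of_deriv_right_lt_deriv_boundary
      (fun x hx => (hg x hx).continuousAt.continuousWithinAt)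
      (fun x hx => (hg x (Ico_subset_Icc_self hx)).hasDerivWithinAt) (by linarith)
      (fun x => ((hasDerivAt_id x).sub_const a |>.add_const 1 |>.const_mul δ |>.const_add c))
      (fun x hx hgx => ?_)
    have hxa : 0 ≤ x - a := sub_nonneg.2 hx.1
    have : c < g x := by rw [hgx]; nlinarith
    linarith [hg' x hx this]
  intro x hx
  have hK : 0 < x - a + 1 := by linarith [hx.1]
  refine le_of_forall_pos_le_add fun ε hε => ?_
  simpa [div_mul_cancel₀ ε hK.ne'] using barrier (ε / (x - a + 1)) (div_pos hε hK) x hx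

theorem stmt_1_general (T0 Tmax S : ℝ) (hT : T0 < Tmax)
    (f : ℝ → ℝ)
    (hf0 : ∀ s ∈ Set.Icc 0 S, 0 ≤ f s)
    (T : ℝ → ℝ)
    (hode : ∀ s ∈ Set.Icc 0 S,
      HasDerivAt T (f s * (max 0 ((Tmax - T s) / (Tmax - T0))) ^ 2) s)
    (hinit : T 0 = T0) :
    MonotoneOn T (Set.Icc 0 S) ∧ ∀ s ∈ Set.Icc 0 S, T s ≤ Tmax := by
  refine ⟨monotoneOn_Icc_of_hasDerivAt_nonneg hode fun s hs => ?_,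
    le_of_hasDerivAt_nonpos_of_gt hode (hinit ▸ hT.le) fun s _ hTs => ?_⟩
  · exact mul_nonneg (hf0 s hs) (sq_nonneg _)
  · have hneg : (Tmax - T s) / (Tmax - T0) ≤ 0 :=
      div_nonpos_of_nonpos_of_nonneg (by linarith) (by linarith)
    simp [max_eq_left hneg]

/-- Quadratic heating model (7): the solution is nondecreasing and bounded by `Tmax`. -/
theorem stmt_1 (T0 Tmax S : ℝ) (hT : T0 < Tmax) (hS : 0 < S)
    (f : ℝ → ℝ) (hf : ContinuousOn f (Set.Icc 0 S))
    (hf0 : ∀ s ∈ Set.Icc 0 S, 0 ≤ f s)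
    (T : ℝ → ℝ)
    (hode : ∀ s ∈ Set.Icc 0 S,
      HasDerivAt T (f s * (max 0 ((Tmax - T s) / (Tmax - T0))) ^ 2) s)
    (hinit : T 0 = T0) :
    MonotoneOn T (Set.Icc 0 S) ∧ ∀ s ∈ Set.Icc 0 S, T s ≤ Tmax :=
  stmt_1_general T0 Tmax S hT f hf0 T hode hinit
end

section
/- Let T solve the semi-discrete Dirichlet heat system with source: T_0' = T_N' = 0, T_0(0) = T_N(0) = T_s, and for 0 < k < N, T_k' = μ(τ)(T_{k-1} - 2T_k + T_{k+1}) + Q_k(τ) where μ(τ) > 0 and Q_k(τ) = q(τ)·max(0,(M - T_k)/(M - T_a))² with q ≥ 0 continuous, T_k(0) = T_a, T_s ≤ M, T_a < M. Then T_k(τ) ≤ M for all k and all τ ≥ 0 in the interval of existence. -/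
/-!
Perturb the fusion temperature to the barrier `M + ε (1 + τ)`. At the first time some
temperature reaches the barrier, that node carries a maximum of the profile above `M`: the
source term vanishes there (its `max 0 _` is inactive), the discrete Laplacian is nonpositive,
and the boundary nodes are frozen, so the node's temperature has derivative `≤ 0 < ε`, the
barrier's slope; it therefore cannot have reached the barrier from below. Letting `ε → 0`
gives the bound `M`.
-/

open Set

theorem nonneg_of_hasDerivWithinAt_Iio_of_le {f : ℝ → ℝ} {a t d : ℝ} (hat : a < t)
    (hf : HasDerivWithinAt f d (Iio t) t) (hle : ∀ s ∈ Ioo a t, f s ≤ f t) : 0 ≤ d := by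
  by_contra! hd
  obtain ⟨s, hslope, hs⟩ := ((hf.limsup_slope_le' (lt_irrefl t) hd).and
    (Ioo_mem_nhdsLT hat)).exists
  rw [slope_def_field, div_neg_iff] at hslope
  rcases hslope with ⟨hfs, -⟩ | ⟨-, hst⟩
  · linarith [hle s hs]
  · linarith [hs.2]

theorem neg_of_hasDerivWithinAt_neg_at_first_zero {ι : Type*} {s : Finset ι} {u : ι → ℝ → ℝ}
    {S : ℝ} (hu : ∀ i ∈ s, ContinuousOn (u i) (Icc 0 S)) (h0 : ∀ i ∈ s, u i 0 < 0)
    (hzero : ∀ t ∈ Ioc 0 S, ∀ i ∈ s, (∀ j ∈ s, u j t ≤ 0) → u i t = 0 →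
      ∃ d < 0, HasDerivWithinAt (u i) d (Iio t) t) :
    ∀ t ∈ Icc 0 S, ∀ i ∈ s, u i t < 0 := by
  by_contra! hne
  set A := ⋃ i ∈ s, Icc 0 S ∩ u i ⁻¹' Ici 0
  have hA : ∀ t, t ∈ A ↔ t ∈ Icc 0 S ∧ ∃ i ∈ s, 0 ≤ u i t := by
    intro t; simp only [A, mem_iUnion₂, mem_inter_iff, mem_preimage, mem_Ici, exists_prop]
    tauto
  have hAclosed : IsClosed A := isClosed_biUnion_finset fun i hi =>
    (hu i hi).preimage_isClosed_of_isClosed isClosed_Icc isClosed_Ici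
  have hAbdd : BddBelow A := ⟨0, fun t ht => ((hA t).1 ht).1.1⟩
  obtain ⟨t₀, ht₀, i, hi, hui⟩ := hne
  have hmem := (hA _).1 (hAclosed.csInf_mem ⟨t₀, (hA t₀).2 ⟨ht₀, i, hi, hui⟩⟩ hAbdd)
  set t := sInf A
  obtain ⟨ht, k, hk, hukt⟩ := hmem
  have hbefore : ∀ σ ∈ Ico 0 t, ∀ j ∈ s, u j σ < 0 := fun σ hσ j hj => by
    by_contra! h
    exact hσ.2.not_ge (csInf_le hAbdd ((hA σ).2 ⟨⟨hσ.1, hσ.2.le.trans ht.2⟩, j, hj, h⟩))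
  have htpos : 0 < t := ht.1.lt_of_ne fun h => (h0 k hk).not_ge (h ▸ hukt)
  have hat : ∀ j ∈ s, u j t ≤ 0 := fun j hj =>
    ContinuousWithinAt.closure_le (by rw [closure_Ico htpos.ne]; exact right_mem_Icc.2 ht.1)
      ((hu j hj t ht).mono fun σ hσ => ⟨hσ.1, hσ.2.le.trans ht.2⟩) continuousWithinAt_const
      fun σ hσ => (hbefore σ hσ j hj).le
  obtain ⟨d, hd, hderiv⟩ := hzero t ⟨htpos, ht.2⟩ k hk hat (le_antisymm (hat k hk) hukt)
  exact hd.not_ge <| nonneg_of_hasDerivWithinAt_Iio_of_le htpos hderiv fun σ hσ =>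
    (hbefore σ (Ioo_subset_Ico_self hσ) k hk).le.trans hukt

theorem laplacian_add_source_nonpos_of_isMax {μ q M Ta a b c : ℝ} (hμ : 0 ≤ μ) (hTa : Ta < M)
    (hM : M < b) (ha : a ≤ b) (hc : c ≤ b) :
    μ * (a - 2 * b + c) + q * (max 0 ((M - b) / (M - Ta))) ^ 2 ≤ 0 := by
  have hsource : max 0 ((M - b) / (M - Ta)) = 0 :=
    max_eq_left (div_nonpos_of_nonpos_of_nonneg (by linarith) (by linarith))
  rw [hsource, zero_pow two_ne_zero, mul_zero, add_zero]
  exact mul_nonpos_of_nonneg_of_nonpos hμ (by linarith)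

theorem exists_hasDerivAt_nonpos_of_isMax {N : ℕ} {μ q M Ta t : ℝ} {T : ℝ → ℕ → ℝ}
    (hμ : 0 ≤ μ) (hTa : Ta < M)
    (h0 : HasDerivAt (fun σ => T σ 0) 0 t) (hN : HasDerivAt (fun σ => T σ N) 0 t)
    (hk : ∀ k, 0 < k → k < N → HasDerivAt (fun σ => T σ k)
      (μ * (T t (k - 1) - 2 * T t k + T t (k + 1)) + q * (max 0 ((M - T t k) / (M - Ta))) ^ 2) t)
    {k : ℕ} (hkN : k ≤ N) (hmax : ∀ j ≤ N, T t j ≤ T t k) (hM : M < T t k) :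
    ∃ D ≤ 0, HasDerivAt (fun σ => T σ k) D t := by
  obtain rfl | rfl | ⟨hk0, hkN⟩ : k = 0 ∨ k = N ∨ (0 < k ∧ k < N) := by omega
  · exact ⟨0, le_rfl, h0⟩
  · exact ⟨0, le_rfl, hN⟩
  · exact ⟨_, laplacian_add_source_nonpos_of_isMax hμ hTa hM (hmax _ (by omega)) (hmax _ hkN),
      hk k hk0 hkN⟩

theorem stmt_15_general (N : ℕ) (S M Ta Ts : ℝ)
    (hTa : Ta < M) (hTs : Ts ≤ M)
    (μ q : ℝ → ℝ)
    (hμpos : ∀ τ ∈ Set.Icc 0 S, 0 < μ τ)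
    (T : ℝ → ℕ → ℝ)
    (h0 : ∀ τ ∈ Set.Icc 0 S, HasDerivAt (fun σ => T σ 0) 0 τ)
    (hNd : ∀ τ ∈ Set.Icc 0 S, HasDerivAt (fun σ => T σ N) 0 τ)
    (hbd : T 0 0 = Ts ∧ T 0 N = Ts)
    (hk : ∀ k, 0 < k → k < N → ∀ τ ∈ Set.Icc 0 S,
      HasDerivAt (fun σ => T σ k)
        (μ τ * (T τ (k - 1) - 2 * T τ k + T τ (k + 1)) +
          q τ * (max 0 ((M - T τ k) / (M - Ta))) ^ 2) τ)
    (hinit : ∀ k, 0 < k → k < N → T 0 k = Ta) :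
    ∀ τ ∈ Set.Icc 0 S, ∀ k ≤ N, T τ k ≤ M := by
  have hcont : ∀ k ∈ Finset.Iic N, ContinuousOn (fun σ => T σ k) (Icc 0 S) := by
    intro k hkN σ hσ
    obtain rfl | rfl | ⟨hk0, hkN⟩ : k = 0 ∨ k = N ∨ (0 < k ∧ k < N) := by
      rw [Finset.mem_Iic] at hkN; omega
    exacts [(h0 σ hσ).continuousAt.continuousWithinAt, (hNd σ hσ).continuousAt.continuousWithinAt,
      (hk k hk0 hkN σ hσ).continuousAt.continuousWithinAt]
  intro τ hτ k hkN
  have hτ1 : 0 < 1 + τ := by linarith [hτ.1]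
  refine le_of_forall_pos_lt_add fun δ hδ => ?_
  set ε := δ / (1 + τ)
  have hε : 0 < ε := div_pos hδ hτ1
  have hbarrier := neg_of_hasDerivWithinAt_neg_at_first_zero (s := Finset.Iic N) (S := S)
    (u := fun j σ => T σ j - (M + ε * (1 + σ)))
    (fun j hj => (hcont j hj).sub (by fun_prop)) ?_ ?_ τ hτ k (Finset.mem_Iic.2 hkN)
  · have : ε * (1 + τ) = δ := div_mul_cancel₀ δ hτ1.ne'
    linarith
  · intro j hj
    rw [Finset.mem_Iic] at hj
    obtain rfl | rfl | ⟨hj0, hjN⟩ : j = 0 ∨ j = N ∨ (0 < j ∧ j < N) := by omega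
    · linarith [hbd.1]
    · linarith [hbd.2]
    · linarith [hinit j hj0 hjN]
  · intro t ht j hj hle heq
    simp only [Finset.mem_Iic, sub_nonpos, sub_eq_zero] at hj hle heq
    have htS : t ∈ Icc 0 S := Ioc_subset_Icc_self ht
    obtain ⟨D, hD, hderiv⟩ := exists_hasDerivAt_nonpos_of_isMax (hμpos t htS).le hTa (h0 t htS)
      (hNd t htS) (fun k hk0 hkN => hk k hk0 hkN t htS) hj (fun i hi => heq ▸ hle i hi)
      (by linarith [mul_pos hε (by linarith [ht.1] : 0 < 1 + t)])
    refine ⟨D - ε, by linarith, (hderiv.sub ?_).hasDerivWithinAt⟩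
    simpa using (((hasDerivAt_id t).const_add 1).const_mul ε).const_add M

/-- Discrete maximum principle for the semi-discrete Dirichlet system with
source (32): all temperatures stay below the fusion temperature `M`. -/
theorem stmt_15 (N : ℕ) (hN : 2 ≤ N) (S M Ta Ts : ℝ) (hS : 0 < S)
    (hTa : Ta < M) (hTs : Ts ≤ M)
    (μ q : ℝ → ℝ) (hμ : ContinuousOn μ (Set.Icc 0 S))
    (hμpos : ∀ τ ∈ Set.Icc 0 S, 0 < μ τ)
    (hq : ContinuousOn q (Set.Icc 0 S)) (hq0 : ∀ τ ∈ Set.Icc 0 S, 0 ≤ q τ)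
    (T : ℝ → ℕ → ℝ)
    (h0 : ∀ τ ∈ Set.Icc 0 S, HasDerivAt (fun σ => T σ 0) 0 τ)
    (hNd : ∀ τ ∈ Set.Icc 0 S, HasDerivAt (fun σ => T σ N) 0 τ)
    (hbd : T 0 0 = Ts ∧ T 0 N = Ts)
    (hk : ∀ k, 0 < k → k < N → ∀ τ ∈ Set.Icc 0 S,
      HasDerivAt (fun σ => T σ k)
        (μ τ * (T τ (k - 1) - 2 * T τ k + T τ (k + 1)) +
          q τ * (max 0 ((M - T τ k) / (M - Ta))) ^ 2) τ)
    (hinit : ∀ k, 0 < k → k < N → T 0 k = Ta) :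
    ∀ τ ∈ Set.Icc 0 S, ∀ k ≤ N, T τ k ≤ M :=
  stmt_15_general N S M Ta Ts hTa hTs μ q hμpos T h0 hNd hbd hk hinit
end
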